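/- For the biased a-shuffle measure P_{n,a,p} on S_n (defined by cutting into a packets with multinomial(n; p_1,...,p_a) sizes and interleaving uniformly), the expected number of fixed points of a random permutation is Σ_{j=1}^n (p_1^j + ... + p_a^j). -/
import Mathlib

open Finset

section Rank
variable {β : Type*} [LinearOrder β]

lemma rank_of_orderIso {k : ℕ} {s : Finset β} (e : Fin k ≃o s) (x : Fin k) :
    (s.filter (fun b => b < (e x : β))).card = (x : ℕ) := by
  classical
  have himg : s.filter (fun b => b < (e x : β)) =
      (Finset.univ.filter (fun i : Fin k => i < x)).image (fun i => ((e i : β))) := by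
    ext b
    simp only [Finset.mem_filter, Finset.mem_image, Finset.mem_univ, true_and]
    constructor
    · rintro ⟨hb, hlt⟩
      refine ⟨e.symm ⟨b, hb⟩, ?_, by simp⟩
      rw [← e.lt_iff_lt, e.apply_symm_apply]
      exact Subtype.coe_lt_coe.mp (by simpa using hlt)
    · rintro ⟨i, hi, rfl⟩
      exact ⟨(e i).2, Subtype.coe_lt_coe.mpr (e.lt_iff_lt.mpr hi)⟩
  rw [himg, Finset.card_image_of_injective _
      (fun i j hij => e.injective (Subtype.coe_injective hij))]
  have h2 : Finset.univ.filter (fun i : Fin k => i < x) = Finset.Iio x := by ext i; simp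
  rw [h2, Fin.card_Iio]

lemma orderIso_eq_iff_rank {k : ℕ} {s : Finset β} (e : Fin k ≃o s) (x : Fin k) (a : s) :
    e x = a ↔ (s.filter (fun b => b < (a : β))).card = (x : ℕ) := by
  classical
  constructor
  · rintro rfl; exact rank_of_orderIso e x
  · intro h
    have h2 := rank_of_orderIso e (e.symm a)
    rw [OrderIso.apply_symm_apply] at h2
    have : x = e.symm a := Fin.ext (by rw [← h, h2])
    rw [this, OrderIso.apply_symm_apply]

end Rank

section SortFix
variable {α : Type*} [LinearOrder α] {n : ℕ}

private lemma lexlt_iff (f : Fin n → α) (x y : Fin n) :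
    ((toLex (f y, y) : α ×ₗ Fin n) < toLex (f x, x)) ↔
      (f y < f x ∨ (f y = f x ∧ (y : ℕ) < (x : ℕ))) := by
  rw [Prod.Lex.lt_iff]
  exact or_congr Iff.rfl (and_congr Iff.rfl Fin.lt_def)

lemma sort_fix_iff (f : Fin n → α) (x : Fin n) :
    Tuple.sort f x = x ↔
      (Finset.univ.filter fun y : Fin n =>
        f y < f x ∨ (f y = f x ∧ (y : ℕ) < (x : ℕ))).card = (x : ℕ) := by
  classical
  set m : Fin n → α ×ₗ Fin n := fun i => toLex (f i, i) with hm
  have hinj : Function.Injective m := by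
    intro i j hij
    have := congrArg (fun p : α ×ₗ Fin n => (ofLex p).2) hij
    simpa [hm] using this
  have h1 : Tuple.sort f x = x ↔ Tuple.graphEquiv₂ f x = Tuple.graphEquiv₁ f x := by
    rw [Tuple.sort, Equiv.trans_apply, Equiv.symm_apply_eq]
    rfl
  have hgraph : Tuple.graph f = Finset.univ.image m := rfl
  have hcoe : ((Tuple.graphEquiv₁ f x : Tuple.graph f) : α ×ₗ Fin n) = m x := rfl
  have hset : (Tuple.graph f).filter (fun b => b < m x)
      = (Finset.univ.filter fun y : Fin n =>
          f y < f x ∨ (f y = f x ∧ (y : ℕ) < (x : ℕ))).image m := by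
    rw [hgraph, Finset.filter_image]
    exact congrArg (fun s : Finset (Fin n) => s.image m)
      (Finset.filter_congr fun y _ => by simpa using lexlt_iff f x y)
  rw [h1, orderIso_eq_iff_rank, hcoe, hset, Finset.card_image_of_injective _ hinj]

end SortFix

section Walk

lemma walk_lemma : ∀ (m : ℕ) (D : ℕ → ℤ), D 0 ≤ 0 → 0 ≤ D m →
    (∀ t < m, D (t+1) = D t ∨ D (t+1) = D t + 1) →
    ((Finset.range (m+1)).filter fun t => D t = 0).card
      = 1 + ((Finset.range m).filter fun t => D t = 0 ∧ D (t+1) = D t).card := by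
  intro m
  induction m with
  | zero =>
    intro D h0 hm _
    have : D 0 = 0 := le_antisymm h0 hm
    simp [Finset.filter_singleton, Finset.range_one, this]
  | succ m ih =>
    intro D h0 hm hstep
    have hstep0 : D 1 = D 0 ∨ D 1 = D 0 + 1 := by
      have := hstep 0 (Nat.succ_pos m); simpa using this
    rw [Finset.card_filter, Finset.card_filter]
    conv_lhs => rw [Finset.sum_range_succ']
    conv_rhs => rw [Finset.sum_range_succ']
    simp only [zero_add]
    rcases le_or_gt (D 1) 0 with hc | hc
    · have hIH := ih (fun t => D (t+1)) hc hm (fun t ht => hstep (t+1) (by omega))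
      rw [Finset.card_filter, Finset.card_filter] at hIH
      beta_reduce at hIH
      rw [hIH]
      have h01 : (D 0 = 0) ↔ (D 0 = 0 ∧ D 1 = D 0) := by
        constructor
        · intro h; exact ⟨h, by omega⟩
        · exact And.left
      rw [if_congr h01 rfl rfl]
      ring
    · have hD0 : D 0 = 0 := by omega
      have hmono : ∀ t, t ≤ m → 1 ≤ D (t+1) := by
        intro t
        induction t with
        | zero => intro _; simp only [zero_add]; omega
        | succ t iht =>
          intro htm
          have h1 := hstep (t+1) (by omega)
          have h2 := iht (by omega)
          omega
      have e1 : ∀ t ∈ Finset.range (m+1), (if D (t+1) = 0 then (1:ℕ) else 0) = 0 := by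
        intro t ht
        rw [Finset.mem_range] at ht
        have := hmono t (by omega)
        simp only [if_neg (show ¬ D (t+1) = 0 by omega)]
      have e2 : ∀ t ∈ Finset.range m,
          (if D (t+1) = 0 ∧ D (t+1+1) = D (t+1) then (1:ℕ) else 0) = 0 := by
        intro t ht
        rw [Finset.mem_range] at ht
        have := hmono t (by omega)
        simp only [if_neg (show ¬ (D (t+1) = 0 ∧ D (t+1+1) = D (t+1)) by omega)]
      rw [Finset.sum_congr rfl e1, Finset.sum_congr rfl e2]
      have h1 : D 1 = D 0 + 1 := by omega
      simp [hD0, h1]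

end Walk

section Mc
variable {α : Type*} [LinearOrder α]

/-- number of letters of `h` that sort strictly before letter `c` at gap position `t`. -/
def Mc (c : α) {m : ℕ} (h : Fin m → α) (t : ℕ) : ℕ :=
  (Finset.univ.filter fun z => h z < c ∨ (h z = c ∧ (z : ℕ) < t)).card

lemma Mc_succ (c : α) {m : ℕ} (g : Fin m → α) (t : ℕ) (ht : t < m) :
    Mc c g (t+1) = Mc c g t + (if g ⟨t, ht⟩ = c then 1 else 0) := by
  classical
  unfold Mc
  by_cases hgc : g ⟨t, ht⟩ = c
  · rw [if_pos hgc]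
    have hins : (Finset.univ.filter fun z : Fin m => g z < c ∨ (g z = c ∧ (z : ℕ) < t+1))
        = insert ⟨t, ht⟩ (Finset.univ.filter fun z => g z < c ∨ (g z = c ∧ (z : ℕ) < t)) := by
      ext z
      simp only [Finset.mem_filter, Finset.mem_insert, Finset.mem_univ, true_and]
      constructor
      · rintro (hlt | ⟨heq, hzt⟩)
        · exact Or.inr (Or.inl hlt)
        · rcases Nat.lt_succ_iff_lt_or_eq.mp hzt with h | h
          · exact Or.inr (Or.inr ⟨heq, h⟩)
          · exact Or.inl (Fin.ext h)
      · rintro (rfl | hlt | ⟨heq, hzt⟩)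
        · exact Or.inr ⟨hgc, Nat.lt_succ_self t⟩
        · exact Or.inl hlt
        · exact Or.inr ⟨heq, Nat.lt_succ_of_lt hzt⟩
    rw [hins, Finset.card_insert_of_notMem]
    · simp only [Finset.mem_filter, Finset.mem_univ, true_and]
      rintro (hlt | ⟨_, hzt⟩)
      · exact absurd hlt (by simp [hgc])
      · exact Nat.lt_irrefl t hzt
  · rw [if_neg hgc]
    simp only [add_zero]
    apply congrArg
    apply Finset.filter_congr
    intro z _
    constructor
    · rintro (hlt | ⟨heq, hzt⟩)
      · exact Or.inl hlt
      · refine Or.inr ⟨heq, ?_⟩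
        rcases Nat.lt_succ_iff_lt_or_eq.mp hzt with h | h
        · exact h
        · exact absurd (by rwa [show z = ⟨t, ht⟩ from Fin.ext h] at heq) hgc
    · rintro (hlt | ⟨heq, hzt⟩)
      · exact Or.inl hlt
      · exact Or.inr ⟨heq, Nat.lt_succ_of_lt hzt⟩

/-- `g` padded to a function on `ℕ`. -/
def pad {m : ℕ} (g : Fin (m+1) → α) (t : ℕ) : α :=
  g ⟨t % (m+1), Nat.mod_lt t m.succ_pos⟩

lemma count_eq (c : α) {m : ℕ} (g : Fin (m+1) → α) :
    ((Finset.range (m+2)).filter fun t => Mc c g t = t).card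
      = 1 + ((Finset.range (m+1)).filter fun t => Mc c g t = t ∧ pad g t = c).card := by
  classical
  set D : ℕ → ℤ := fun t => (t : ℤ) - (Mc c g t : ℤ) with hD
  have h0 : D 0 ≤ 0 := by simp [hD]
  have hm : 0 ≤ D (m+1) := by
    have h1 : Mc c g (m+1) ≤ m+1 := by
      calc Mc c g (m+1) ≤ (Finset.univ : Finset (Fin (m+1))).card := Finset.card_filter_le _ _
      _ = m+1 := by simp
    simp only [hD]
    omega
  have hstep : ∀ t < m+1, D (t+1) = D t ∨ D (t+1) = D t + 1 := by
    intro t ht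
    have hM := Mc_succ c g t ht
    by_cases hgc : g ⟨t, ht⟩ = c
    · left; rw [if_pos hgc] at hM; simp only [hD, hM]; push_cast; ring
    · right; rw [if_neg hgc] at hM; simp only [hD, hM]; push_cast; ring
  have hw := walk_lemma (m+1) D h0 hm hstep
  have e1 : (Finset.range (m+2)).filter (fun t => Mc c g t = t)
      = (Finset.range (m+2)).filter (fun t => D t = 0) := by
    apply Finset.filter_congr
    intro t _
    simp only [hD]
    omega
  have e2 : (Finset.range (m+1)).filter (fun t => Mc c g t = t ∧ pad g t = c)
      = (Finset.range (m+1)).filter (fun t => D t = 0 ∧ D (t+1) = D t) := by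
    apply Finset.filter_congr
    intro t ht
    rw [Finset.mem_range] at ht
    have hpad : pad g t = g ⟨t, ht⟩ := congrArg g (Fin.ext (Nat.mod_eq_of_lt ht))
    have hM := Mc_succ c g t ht
    rw [hpad]
    by_cases hgc : g ⟨t, ht⟩ = c
    · rw [if_pos hgc] at hM
      simp only [hD, hgc, eq_self_iff_true, and_true]
      omega
    · rw [if_neg hgc] at hM
      simp only [hD]
      constructor
      · rintro ⟨_, h2⟩; exact absurd h2 hgc
      · rintro ⟨h1, h2⟩
        omega
  rw [e1, e2, hw]

end Mc

section InsertNth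
variable {α : Type*} [LinearOrder α]

lemma succAbove_coe_lt {m : ℕ} (x : Fin (m+1)) (z : Fin m) :
    ((x.succAbove z : Fin (m+1)) : ℕ) < (x : ℕ) ↔ (z : ℕ) < (x : ℕ) := by
  rcases lt_or_ge (z.castSucc) x with hlt | hle
  · rw [Fin.succAbove_of_castSucc_lt _ _ hlt]
    exact Iff.rfl
  · rw [Fin.succAbove_of_le_castSucc _ _ hle]
    simp only [Fin.val_succ]
    simp only [Fin.le_def, Fin.coe_castSucc] at hle
    omega

lemma filter_card_of_eq {m : ℕ} (x : Fin (m+1)) (c : α) (h : Fin m → α)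
    (f : Fin (m+1) → α) (hfx : f x = c) (hfs : ∀ z, f (x.succAbove z) = h z) :
    (Finset.univ.filter fun y : Fin (m+1) =>
        f y < c ∨ (f y = c ∧ (y : ℕ) < (x : ℕ))).card
      = Mc c h (x : ℕ) := by
  classical
  unfold Mc
  have hset : (Finset.univ.filter fun y : Fin (m+1) =>
        f y < c ∨ (f y = c ∧ (y : ℕ) < (x : ℕ)))
      = (Finset.univ.filter fun z : Fin m =>
          h z < c ∨ (h z = c ∧ (z : ℕ) < (x : ℕ))).image x.succAbove := by
    ext y
    simp only [Finset.mem_filter, Finset.mem_image, Finset.mem_univ, true_and]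
    constructor
    · intro hy
      have hyx : y ≠ x := by
        rintro rfl
        rw [hfx] at hy
        rcases hy with h1 | ⟨_, h2⟩
        · exact lt_irrefl c h1
        · exact Nat.lt_irrefl _ h2
      obtain ⟨z, rfl⟩ := Fin.exists_succAbove_eq hyx
      refine ⟨z, ?_, rfl⟩
      rw [hfs] at hy
      rcases hy with h1 | ⟨h2, h3⟩
      · exact Or.inl h1
      · exact Or.inr ⟨h2, (succAbove_coe_lt x z).mp h3⟩
    · rintro ⟨z, hz, rfl⟩
      rw [hfs]
      rcases hz with h1 | ⟨h2, h3⟩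
      · exact Or.inl h1
      · exact Or.inr ⟨h2, (succAbove_coe_lt x z).mpr h3⟩
  rw [hset, Finset.card_image_of_injective _ (Fin.succAbove_right_injective)]

end InsertNth

section Tlem
variable {α : Type*} [Fintype α] [LinearOrder α]

lemma Tlem (p : α → ℝ) (hs : ∑ c, p c = 1) (c : α) :
    ∀ m : ℕ, (∑ g : Fin m → α, (∏ z, p (g z)) *
        (((Finset.range (m+1)).filter fun t => Mc c g t = t).card : ℝ))
      = ∑ j ∈ Finset.range (m+1), p c ^ j := by
  intro m
  induction m with
  | zero =>
    rw [Fintype.sum_unique]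
    simp [Mc, Finset.filter_singleton]
  | succ m ih =>
    classical
    have hw1 : (∑ g : Fin (m+1) → α, ∏ z, p (g z)) = 1 := by
      rw [← Fintype.piFinset_univ, ← Finset.prod_univ_sum]
      simp [hs]
    have e : ∀ g : Fin (m+1) → α, (∏ z, p (g z)) *
          (((Finset.range (m+2)).filter fun t => Mc c g t = t).card : ℝ)
        = (∏ z, p (g z)) + ∑ t ∈ Finset.range (m+1), (∏ z, p (g z)) *
            (if Mc c g t = t ∧ pad g t = c then (1:ℝ) else 0) := by
      intro g
      rw [count_eq c g, Finset.card_filter]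
      push_cast
      rw [mul_add, mul_one, Finset.mul_sum]
    have step2 : ∀ t ∈ Finset.range (m+1),
        (∑ g : Fin (m+1) → α, (∏ z, p (g z)) *
            (if Mc c g t = t ∧ pad g t = c then (1:ℝ) else 0))
        = p c * ∑ h : Fin m → α, (∏ z, p (h z)) *
            (if Mc c h t = t then (1:ℝ) else 0) := by
      intro t ht
      rw [Finset.mem_range] at ht
      set x : Fin (m+1) := ⟨t, ht⟩ with hx
      have hpad : ∀ (b : α) (h : Fin m → α), pad (Fin.insertNth (α := fun _ => α) x b h) t = b := by
        intro b h
        have h1 : pad (Fin.insertNth (α := fun _ => α) x b h) t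
            = (Fin.insertNth (α := fun _ => α) x b h) x :=
          congrArg (Fin.insertNth (α := fun _ => α) x b h) (Fin.ext (Nat.mod_eq_of_lt ht))
        rw [h1, Fin.insertNth_apply_same]
      have hprod : ∀ (b : α) (h : Fin m → α),
          (∏ i, p ((Fin.insertNth (α := fun _ => α) x b h) i)) = p b * ∏ z, p (h z) := by
        intro b h
        rw [Fin.prod_univ_succAbove (fun i => p ((Fin.insertNth (α := fun _ => α) x b h) i)) x]
        simp [Fin.insertNth_apply_same, Fin.insertNth_apply_succAbove]
      have hMc : ∀ h : Fin m → α, Mc c (Fin.insertNth (α := fun _ => α) x c h) t = Mc c h t := by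
        intro h
        have h2 := filter_card_of_eq x c h (Fin.insertNth (α := fun _ => α) x c h)
          (Fin.insertNth_apply_same (α := fun _ => α) x c h) (fun z => Fin.insertNth_apply_succAbove (α := fun _ => α) x c h z)
        have h3 : (x : ℕ) = t := rfl
        rw [h3] at h2
        exact h2
      calc (∑ g : Fin (m+1) → α, (∏ z, p (g z)) *
            (if Mc c g t = t ∧ pad g t = c then (1:ℝ) else 0))
          = ∑ bh : α × (Fin m → α), (∏ z, p ((Fin.insertNth (α := fun _ => α) x bh.1 bh.2) z)) *
              (if Mc c (Fin.insertNth (α := fun _ => α) x bh.1 bh.2) t = t ∧ pad (Fin.insertNth (α := fun _ => α) x bh.1 bh.2) t = c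
                then (1:ℝ) else 0) :=
            (Fintype.sum_equiv (Fin.insertNthEquiv (fun _ => α) x) _ _ (fun bh => rfl)).symm
        _ = ∑ b : α, ∑ h : Fin m → α, (∏ z, p ((Fin.insertNth (α := fun _ => α) x b h) z)) *
              (if Mc c (Fin.insertNth (α := fun _ => α) x b h) t = t ∧ pad (Fin.insertNth (α := fun _ => α) x b h) t = c
                then (1:ℝ) else 0) := Fintype.sum_prod_type _
        _ = p c * ∑ h : Fin m → α, (∏ z, p (h z)) *
              (if Mc c h t = t then (1:ℝ) else 0) := by
            rw [Finset.sum_eq_single c]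
            · rw [Finset.mul_sum]
              apply Finset.sum_congr rfl
              intro h _
              rw [hprod, hpad, hMc]
              simp only [eq_self_iff_true, and_true]
              ring
            · intro b _ hb
              apply Finset.sum_eq_zero
              intro h _
              rw [hpad]
              simp [hb]
            · intro hc
              exact absurd (Finset.mem_univ c) hc
    calc (∑ g : Fin (m+1) → α, (∏ z, p (g z)) *
          (((Finset.range (m+2)).filter fun t => Mc c g t = t).card : ℝ))
        = ∑ g : Fin (m+1) → α, ((∏ z, p (g z)) +
            ∑ t ∈ Finset.range (m+1), (∏ z, p (g z)) *
              (if Mc c g t = t ∧ pad g t = c then (1:ℝ) else 0)) :=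
          Finset.sum_congr rfl (fun g _ => e g)
      _ = 1 + ∑ t ∈ Finset.range (m+1), ∑ g : Fin (m+1) → α, (∏ z, p (g z)) *
            (if Mc c g t = t ∧ pad g t = c then (1:ℝ) else 0) := by
          rw [Finset.sum_add_distrib, hw1, Finset.sum_comm]
      _ = 1 + ∑ t ∈ Finset.range (m+1), p c * ∑ h : Fin m → α, (∏ z, p (h z)) *
            (if Mc c h t = t then (1:ℝ) else 0) := by
          rw [Finset.sum_congr rfl step2]
      _ = 1 + p c * ∑ h : Fin m → α, (∏ z, p (h z)) *
            (((Finset.range (m+1)).filter fun t => Mc c h t = t).card : ℝ) := by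
          rw [← Finset.mul_sum, Finset.sum_comm]
          congr 2
          apply Finset.sum_congr rfl
          intro h _
          rw [← Finset.mul_sum, Finset.card_filter]
          push_cast
          rfl
      _ = ∑ j ∈ Finset.range (m+2), p c ^ j := by
          conv_rhs => rw [geom_sum_succ]
          rw [ih]
          ring

end Tlem

lemma filter_card_irrel {ι : Type*} (s : Finset ι) (p : ι → Prop)
    (i1 i2 : DecidablePred p) :
    (@Finset.filter ι p i1 s).card = (@Finset.filter ι p i2 s).card := by
  have h : i1 = i2 := Subsingleton.elim _ _
  subst h
  rfl

lemma sort_fix_iff' {α : Type*} [LinearOrder α] {n : ℕ} (f : Fin n → α) (x : Fin n)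
    (inst : DecidablePred fun y : Fin n => f y < f x ∨ (f y = f x ∧ (y : ℕ) < (x : ℕ))) :
    Tuple.sort f x = x ↔
      (@Finset.filter _ _ inst Finset.univ).card = (x : ℕ) := by
  rw [sort_fix_iff f x, filter_card_irrel Finset.univ _ _ inst]

lemma filter_card_of_eq' {α : Type*} [LinearOrder α] {m : ℕ} (x : Fin (m+1)) (c : α)
    (h : Fin m → α) (f : Fin (m+1) → α) (hfx : f x = c) (hfs : ∀ z, f (x.succAbove z) = h z)
    (inst : DecidablePred fun y : Fin (m+1) => f y < c ∨ (f y = c ∧ (y : ℕ) < (x : ℕ))) :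
    (@Finset.filter _ _ inst Finset.univ).card = Mc c h (x : ℕ) := by
  rw [filter_card_irrel Finset.univ _ inst _]
  exact filter_card_of_eq x c h f hfx hfs

/-- The biased riffle shuffle measure on `S_n` for a probability vector `p` indexed by
a linearly ordered alphabet `α`, via the inverse description: each card is independently
assigned a letter (letter `c` with probability `p c`), the cards are stably sorted by
letter (`Tuple.sort`), and the shuffle is the inverse of the resulting rearrangement. -/
noncomputable def shuffleP (n : ℕ) {α : Type*} [Fintype α] [LinearOrder α]
    (p : α → ℝ) (π : Equiv.Perm (Fin n)) : ℝ :=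
  ∑ f ∈ Finset.univ.filter (fun f : Fin n → α => (Tuple.sort f)⁻¹ = π), ∏ i, p (f i)

/-- Under the biased `a`-shuffle measure `P_{n,a,p}`, the expected number of fixed
points of a random permutation is `∑_{j=1}^n (p₁^j + ⋯ + p_a^j)`. -/
theorem stmt7 (n a : ℕ) (p : Fin a → ℝ) (hp : ∀ i, 0 ≤ p i) (hs : ∑ i, p i = 1) :
    ∑ π : Equiv.Perm (Fin n),
        shuffleP n p π * ((Finset.univ.filter fun x => π x = x).card : ℝ) =
      ∑ j ∈ Finset.Icc 1 n, ∑ i, p i ^ j := by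
  have hfix : ∀ (σ : Equiv.Perm (Fin n)),
      (Finset.univ.filter fun x => σ⁻¹ x = x) = (Finset.univ.filter fun x => σ x = x) := by
    intro σ
    apply Finset.filter_congr
    intro x _
    rw [Equiv.Perm.inv_eq_iff_eq, eq_comm]
  have h1 : ∑ π : Equiv.Perm (Fin n),
        shuffleP n p π * ((Finset.univ.filter fun x => π x = x).card : ℝ)
      = ∑ f : Fin n → Fin a, (∏ i, p (f i)) *
          ((Finset.univ.filter fun x => Tuple.sort f x = x).card : ℝ) := by
    unfold shuffleP
    calc ∑ π : Equiv.Perm (Fin n),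
          (∑ f ∈ Finset.univ.filter (fun f : Fin n → Fin a => (Tuple.sort f)⁻¹ = π), ∏ i, p (f i))
            * ((Finset.univ.filter fun x => π x = x).card : ℝ)
        = ∑ π : Equiv.Perm (Fin n),
            ∑ f ∈ Finset.univ.filter (fun f : Fin n → Fin a => (Tuple.sort f)⁻¹ = π),
              (∏ i, p (f i)) * ((Finset.univ.filter fun x => Tuple.sort f x = x).card : ℝ) := by
          apply Finset.sum_congr rfl
          intro π _
          rw [Finset.sum_mul]
          apply Finset.sum_congr rfl
          intro f hf
          rw [Finset.mem_filter] at hf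
          rw [← hf.2, hfix]
      _ = _ := Finset.sum_fiberwise _ _ _
  rw [h1]
  cases n with
  | zero => simp
  | succ m =>
    have h2 : ∀ f : Fin (m+1) → Fin a,
        (∏ i, p (f i)) * ((Finset.univ.filter fun x => Tuple.sort f x = x).card : ℝ)
          = ∑ x : Fin (m+1), (∏ i, p (f i)) *
              (if (Finset.univ.filter fun y : Fin (m+1) =>
                  f y < f x ∨ (f y = f x ∧ (y : ℕ) < (x : ℕ))).card = (x : ℕ)
                then (1:ℝ) else 0) := by
      intro f
      rw [Finset.card_filter]
      push_cast
      rw [Finset.mul_sum]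
      apply Finset.sum_congr rfl
      intro x _
      rw [if_congr (sort_fix_iff' f x _) rfl rfl]
    have h4 : ∀ x : Fin (m+1),
        (∑ f : Fin (m+1) → Fin a, (∏ i, p (f i)) *
            (if (Finset.univ.filter fun y : Fin (m+1) =>
                f y < f x ∨ (f y = f x ∧ (y : ℕ) < (x : ℕ))).card = (x : ℕ)
              then (1:ℝ) else 0))
        = ∑ b, p b * ∑ h : Fin m → Fin a, (∏ z, p (h z)) *
            (if Mc b h (x : ℕ) = (x : ℕ) then (1:ℝ) else 0) := by
      intro x
      have hprod : ∀ (b : Fin a) (h : Fin m → Fin a),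
          (∏ i, p ((Fin.insertNth (α := fun _ => Fin a) x b h) i)) = p b * ∏ z, p (h z) := by
        intro b h
        rw [Fin.prod_univ_succAbove (fun i => p ((Fin.insertNth (α := fun _ => Fin a) x b h) i)) x]
        simp [Fin.insertNth_apply_same, Fin.insertNth_apply_succAbove]
      calc (∑ f : Fin (m+1) → Fin a, (∏ i, p (f i)) *
            (if (Finset.univ.filter fun y : Fin (m+1) =>
                f y < f x ∨ (f y = f x ∧ (y : ℕ) < (x : ℕ))).card = (x : ℕ)
              then (1:ℝ) else 0))
          = ∑ bh : Fin a × (Fin m → Fin a),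
              (∏ i, p ((Fin.insertNth (α := fun _ => Fin a) x bh.1 bh.2) i)) *
              (if (Finset.univ.filter fun y : Fin (m+1) =>
                  (Fin.insertNth (α := fun _ => Fin a) x bh.1 bh.2) y
                      < (Fin.insertNth (α := fun _ => Fin a) x bh.1 bh.2) x
                    ∨ ((Fin.insertNth (α := fun _ => Fin a) x bh.1 bh.2) y
                        = (Fin.insertNth (α := fun _ => Fin a) x bh.1 bh.2) x
                      ∧ (y : ℕ) < (x : ℕ))).card = (x : ℕ)
                then (1:ℝ) else 0) :=
            (Fintype.sum_equiv (Fin.insertNthEquiv (fun _ => Fin a) x) _ _ (fun bh => rfl)).symm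
        _ = ∑ b : Fin a, ∑ h : Fin m → Fin a,
              (∏ i, p ((Fin.insertNth (α := fun _ => Fin a) x b h) i)) *
              (if (Finset.univ.filter fun y : Fin (m+1) =>
                  (Fin.insertNth (α := fun _ => Fin a) x b h) y
                      < (Fin.insertNth (α := fun _ => Fin a) x b h) x
                    ∨ ((Fin.insertNth (α := fun _ => Fin a) x b h) y
                        = (Fin.insertNth (α := fun _ => Fin a) x b h) x
                      ∧ (y : ℕ) < (x : ℕ))).card = (x : ℕ)
                then (1:ℝ) else 0) := Fintype.sum_prod_type _
        _ = ∑ b, p b * ∑ h : Fin m → Fin a, (∏ z, p (h z)) *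
              (if Mc b h (x : ℕ) = (x : ℕ) then (1:ℝ) else 0) := by
            apply Finset.sum_congr rfl
            intro b _
            rw [Finset.mul_sum]
            apply Finset.sum_congr rfl
            intro h _
            have hcond : ((Finset.univ.filter fun y : Fin (m+1) =>
                  (Fin.insertNth (α := fun _ => Fin a) x b h) y
                      < (Fin.insertNth (α := fun _ => Fin a) x b h) x
                    ∨ ((Fin.insertNth (α := fun _ => Fin a) x b h) y
                        = (Fin.insertNth (α := fun _ => Fin a) x b h) x
                      ∧ (y : ℕ) < (x : ℕ))).card = (x : ℕ))
                ↔ (Mc b h (x : ℕ) = (x : ℕ)) := by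
              rw [show (Fin.insertNth (α := fun _ => Fin a) x b h) x = b from
                  Fin.insertNth_apply_same (α := fun _ => Fin a) x b h]
              rw [filter_card_of_eq' x b h _
                (Fin.insertNth_apply_same (α := fun _ => Fin a) x b h)
                (fun z => Fin.insertNth_apply_succAbove (α := fun _ => Fin a) x b h z) _]
            rw [if_congr hcond rfl rfl, hprod b h]
            ring
    calc (∑ f : Fin (m+1) → Fin a, (∏ i, p (f i)) *
          ((Finset.univ.filter fun x => Tuple.sort f x = x).card : ℝ))
        = ∑ x : Fin (m+1), ∑ f : Fin (m+1) → Fin a, (∏ i, p (f i)) *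
            (if (Finset.univ.filter fun y : Fin (m+1) =>
                f y < f x ∨ (f y = f x ∧ (y : ℕ) < (x : ℕ))).card = (x : ℕ)
              then (1:ℝ) else 0) := by
          rw [Finset.sum_congr rfl (fun f _ => h2 f), Finset.sum_comm]
      _ = ∑ x : Fin (m+1), ∑ b, p b * ∑ h : Fin m → Fin a, (∏ z, p (h z)) *
            (if Mc b h (x : ℕ) = (x : ℕ) then (1:ℝ) else 0) :=
          Finset.sum_congr rfl (fun x _ => h4 x)
      _ = ∑ t ∈ Finset.range (m+1), ∑ b, p b * ∑ h : Fin m → Fin a, (∏ z, p (h z)) *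
            (if Mc b h t = t then (1:ℝ) else 0) :=
          Fin.sum_univ_eq_sum_range (fun t => ∑ b, p b * ∑ h : Fin m → Fin a, (∏ z, p (h z)) *
            (if Mc b h t = t then (1:ℝ) else 0)) (m+1)
      _ = ∑ b, p b * ∑ h : Fin m → Fin a, (∏ z, p (h z)) *
            (((Finset.range (m+1)).filter fun t => Mc b h t = t).card : ℝ) := by
          rw [Finset.sum_comm]
          apply Finset.sum_congr rfl
          intro b _
          rw [← Finset.mul_sum, Finset.sum_comm]
          congr 1
          apply Finset.sum_congr rfl
          intro h _
          rw [← Finset.mul_sum, Finset.card_filter]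
          push_cast
          rfl
      _ = ∑ b, p b * ∑ j ∈ Finset.range (m+1), p b ^ j := by
          apply Finset.sum_congr rfl
          intro b _
          rw [Tlem p hs b m]
      _ = ∑ j ∈ Finset.Icc 1 (m+1), ∑ i, p i ^ j := by
          rw [← Finset.Ico_add_one_right_eq_Icc, Finset.sum_Ico_eq_sum_range]
          rw [Finset.sum_comm]
          apply Finset.sum_congr rfl
          intro b _
          rw [Finset.mul_sum]
          apply Finset.sum_congr rfl
          intro j _
          rw [pow_add, pow_one]
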